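/- arXiv:2202.01328 — 2 statements merged into one kernel-verified Lean document; each statement's English description precedes it below -/
import Mathlib

section
/- Let a, b : [−τ, τ] → ℝ be C¹ functions with a'(t) > 0, b'(t) > 0, and (a(t)·b'(t) + b(t)·a'(t))² < 4·a'(t)·b'(t) for all t ∈ [−τ, τ]. Then for every (W, S) ∈ ℝ² with (W, S) ≠ (0, 0), the function t ↦ (W + a(t)·S)·(S + b(t)·W) is strictly monotone increasing on [−τ, τ]. -/
theorem stmt4 (τ : ℝ) (hτ : 0 < τ) (a b a' b' : ℝ → ℝ)
    (ha : ∀ t ∈ Set.Icc (-τ) τ, HasDerivAt a (a' t) t)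
    (hb : ∀ t ∈ Set.Icc (-τ) τ, HasDerivAt b (b' t) t)
    (ha'cont : ContinuousOn a' (Set.Icc (-τ) τ))
    (hb'cont : ContinuousOn b' (Set.Icc (-τ) τ))
    (ha' : ∀ t ∈ Set.Icc (-τ) τ, 0 < a' t)
    (hb' : ∀ t ∈ Set.Icc (-τ) τ, 0 < b' t)
    (hdisc : ∀ t ∈ Set.Icc (-τ) τ,
      (a t * b' t + b t * a' t)^2 < 4 * a' t * b' t) :
    ∀ W S : ℝ, (W, S) ≠ ((0:ℝ), (0:ℝ)) →
      StrictMonoOn (fun t => (W + a t * S) * (S + b t * W)) (Set.Icc (-τ) τ) := by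
  intro W S hWS
  have hWS' : W ≠ 0 ∨ S ≠ 0 := by
    by_contra h
    push_neg at h
    exact hWS (by simp [h.1, h.2])
  have hacont : ContinuousOn a (Set.Icc (-τ) τ) := fun x hx =>
    (ha x hx).continuousAt.continuousWithinAt
  have hbcont : ContinuousOn b (Set.Icc (-τ) τ) := fun x hx =>
    (hb x hx).continuousAt.continuousWithinAt
  apply strictMonoOn_of_deriv_pos (convex_Icc _ _)
  · exact ContinuousOn.mul
      (continuousOn_const.add (hacont.mul continuousOn_const))
      (continuousOn_const.add (hbcont.mul continuousOn_const))
  · intro x hx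
    rw [interior_Icc] at hx
    have hx' : x ∈ Set.Icc (-τ) τ := Set.mem_Icc_of_Ioo hx
    have hf : HasDerivAt (fun t => (W + a t * S) * (S + b t * W))
        (a' x * S * (S + b x * W) + (W + a x * S) * (b' x * W)) x :=
      (((ha x hx').mul_const S).const_add W).mul
        (((hb x hx').mul_const W).const_add S)
    rw [hf.deriv]
    have hA := ha' x hx'
    have hB := hb' x hx'
    have hD := hdisc x hx'
    rcases hWS' with hW | hS
    · nlinarith [sq_nonneg (2 * a' x * S + (a x * b' x + b x * a' x) * W),
        mul_pos hA hB, sq_pos_of_ne_zero hW,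
        mul_pos (mul_pos hA hB) (sq_pos_of_ne_zero hW),
        mul_pos hA (sq_pos_of_ne_zero hW)]
    · nlinarith [sq_nonneg (2 * b' x * W + (a x * b' x + b x * a' x) * S),
        mul_pos hA hB, sq_pos_of_ne_zero hS,
        mul_pos (mul_pos hA hB) (sq_pos_of_ne_zero hS),
        mul_pos hB (sq_pos_of_ne_zero hS)]
end

section
/- Let a, b : [0, τ] → ℝ be C¹ with a(0) = b(0) = 0, a' > 0, b' > 0, and (a·b' + b·a')² < 4·a'·b' on [0, τ], and let c > 0. If a vector (W, S, T) ∈ ℝ³ satisfies W·S − c·T² > 0, then (W + a(t)·S)·(S + b(t)·W) − c·T² > 0 for every t ∈ [0, τ]. -/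
open Set Filter Topology

theorem stmt5 (τ c : ℝ) (hτ : 0 < τ) (hc : 0 < c) (a b a' b' : ℝ → ℝ)
    (ha : ∀ t ∈ Set.Icc 0 τ, HasDerivAt a (a' t) t)
    (hb : ∀ t ∈ Set.Icc 0 τ, HasDerivAt b (b' t) t)
    (ha'cont : ContinuousOn a' (Set.Icc 0 τ))
    (hb'cont : ContinuousOn b' (Set.Icc 0 τ))
    (ha0 : a 0 = 0) (hb0 : b 0 = 0)
    (ha' : ∀ t ∈ Set.Icc 0 τ, 0 < a' t)
    (hb' : ∀ t ∈ Set.Icc 0 τ, 0 < b' t)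
    (hdisc : ∀ t ∈ Set.Icc 0 τ, (a t * b' t + b t * a' t)^2 < 4 * a' t * b' t)
    (W S T : ℝ) (h : W * S - c * T^2 > 0) :
    ∀ t ∈ Set.Icc 0 τ, (W + a t * S) * (S + b t * W) - c * T^2 > 0 := by
  intro t₁ ht₁
  by_contra hcon
  push_neg at hcon
  set f : ℝ → ℝ := fun t => (W + a t * S) * (S + b t * W) - c * T ^ 2 with hf
  have hWS : 0 < W * S := by nlinarith [sq_nonneg T]
  have hW : W ≠ 0 := by
    intro hW0
    rw [hW0, zero_mul] at hWS
    exact lt_irrefl 0 hWS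
  have hW2 : 0 < W ^ 2 := by positivity
  have hf0 : 0 < f 0 := by simp only [hf, ha0, hb0, zero_mul, add_zero]; linarith
  -- the bad set
  set K : Set ℝ := {t ∈ Icc 0 t₁ | f t ≤ 0} with hK
  have hKne : t₁ ∈ K := ⟨⟨ht₁.1, le_refl _⟩, hcon⟩
  have hsub : Icc 0 t₁ ⊆ Icc 0 τ := Icc_subset_Icc le_rfl ht₁.2
  have hKclosed : IsClosed K := by
    have hac : ContinuousOn a (Icc 0 t₁) := fun t ht =>
      ((ha t (hsub ht)).continuousAt).continuousWithinAt
    have hbc : ContinuousOn b (Icc 0 t₁) := fun t ht =>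
      ((hb t (hsub ht)).continuousAt).continuousWithinAt
    have hfc : ContinuousOn f (Icc 0 t₁) := by
      apply ContinuousOn.sub
      · exact ((continuousOn_const.add (hac.mul continuousOn_const)).mul
          (continuousOn_const.add (hbc.mul continuousOn_const)))
      · exact continuousOn_const
    have : K = Icc 0 t₁ ∩ f ⁻¹' Iic 0 := by
      ext t; simp [hK, and_comm]
    rw [this]
    exact hfc.preimage_isClosed_of_isClosed isClosed_Icc isClosed_Iic
  have hKbdd : BddBelow K := ⟨0, fun t ht => ht.1.1⟩
  set t₀ : ℝ := sInf K with ht₀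
  have ht₀K : t₀ ∈ K := hKclosed.csInf_mem ⟨t₁, hKne⟩ hKbdd
  have ht₀mem : t₀ ∈ Icc 0 τ := hsub ht₀K.1
  have ht₀pos : 0 < t₀ := by
    rcases lt_or_eq_of_le ht₀K.1.1 with h' | h'
    · exact h'
    · exfalso
      have h2 := ht₀K.2
      rw [← h'] at h2
      linarith
  -- f is positive on [0, t₀)
  have hpos : ∀ t ∈ Ioo (0:ℝ) t₀, 0 < f t := by
    intro t ht
    by_contra hle
    push_neg at hle
    have : t ∈ K := ⟨⟨le_of_lt ht.1, le_trans (le_of_lt ht.2) ht₀K.1.2⟩, hle⟩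
    exact absurd (csInf_le hKbdd this) (not_le.mpr ht.2)
  -- derivative of f at t₀
  set D : ℝ := (a' t₀ * S) * (S + b t₀ * W) + (W + a t₀ * S) * (b' t₀ * W) with hD
  have hderiv : HasDerivAt f D t₀ := by
    have h1 : HasDerivAt (fun t => W + a t * S) (a' t₀ * S) t₀ :=
      ((ha t₀ ht₀mem).mul_const S).const_add W
    have h2 : HasDerivAt (fun t => S + b t * W) (b' t₀ * W) t₀ :=
      ((hb t₀ ht₀mem).mul_const W).const_add S
    exact (h1.mul h2).sub_const (c * T ^ 2)
  have hDpos : 0 < D := by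
    have h1 := ha' t₀ ht₀mem
    have h2 := hb' t₀ ht₀mem
    have h3 := hdisc t₀ ht₀mem
    nlinarith [sq_nonneg (2 * a' t₀ * S + (a t₀ * b' t₀ + b t₀ * a' t₀) * W),
      mul_pos (sub_pos.mpr h3) hW2, sq_nonneg ((a t₀ * b' t₀ + b t₀ * a' t₀) * W)]
  -- use slope
  rw [hasDerivAt_iff_tendsto_slope] at hderiv
  have hle : 𝓝[Ioo (0:ℝ) t₀] t₀ ≤ 𝓝[≠] t₀ :=
    nhdsWithin_mono t₀ (fun x hx => ne_of_lt hx.2)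
  have hNeBot : (𝓝[Ioo (0:ℝ) t₀] t₀).NeBot := by
    rw [← mem_closure_iff_nhdsWithin_neBot, closure_Ioo (ne_of_lt ht₀pos)]
    exact ⟨le_of_lt ht₀pos, le_refl _⟩
  have hev : ∀ᶠ t in 𝓝[Ioo (0:ℝ) t₀] t₀, 0 < slope f t₀ t :=
    ((hderiv.eventually (eventually_gt_nhds hDpos)).filter_mono hle)
  have hmem : ∀ᶠ t in 𝓝[Ioo (0:ℝ) t₀] t₀, t ∈ Ioo (0:ℝ) t₀ :=
    eventually_mem_nhdsWithin
  obtain ⟨t, hslope, htmem⟩ := (hev.and hmem).exists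
  have htlt : t - t₀ < 0 := sub_neg.mpr htmem.2
  rw [slope_def_field, div_pos_iff] at hslope
  have hlt : f t < f t₀ := by
    rcases hslope with ⟨h1, h2⟩ | ⟨h1, h2⟩ <;> linarith
  have hft0 : f t₀ ≤ 0 := ht₀K.2
  have := hpos t htmem
  linarith
end
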